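/- arXiv:2004.05875 — 4 statements merged into one kernel-verified Lean document; each statement's English description precedes it below -/
import Mathlib

section
/- In the clique-reduction temporal graph, an e-vertex corresponding to edge v_i v_j of G' is unreachable from v* after a set of δ-delays of label-1 edges if and only if both edges v*v_i and v*v_j were delayed. -/
/-- `Reaches L s u t`: there is a strict temporal path from `s` to `u` in the temporal graph
with availability relation `L` (edge `u v` available at time `t`), arriving at time `t`
(`t = 0` for the trivial path). Consecutive edges use strictly increasing time labels. -/
inductive Reaches {V : Type*} (L : V → V → ℕ → Prop) (s : V) : V → ℕ → Prop
  | refl : Reaches L s s 0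
  | step {u v : V} {t t' : ℕ} : Reaches L s u t → L u v t' → t < t' → Reaches L s v t'

/-- `u` is temporally reachable from `s`. -/
def TReach {V : Type*} (L : V → V → ℕ → Prop) (s u : V) : Prop := ∃ t, Reaches L s u t


/-- Vertex set of the clique-reduction temporal graph: `none` is the source `v*`,
`some (.inl v)` is a v-vertex, `some (.inr e)` is an e-vertex. -/
abbrev W (V' : Type*) (G' : SimpleGraph V') : Type _ := Option (V' ⊕ ↥G'.edgeSet)

/-- The clique-reduction temporal graph, where the edge `v* v` has label `f v`
(so `f v = 1` means not delayed) and each edge between a v-vertex and an incident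
e-vertex has label 2. -/
def clabel {V' : Type*} (G' : SimpleGraph V') (f : V' → ℕ) :
    W V' G' → W V' G' → ℕ → Prop := fun a b t =>
  (∃ v : V', ((a = none ∧ b = some (.inl v)) ∨ (a = some (.inl v) ∧ b = none)) ∧ t = f v) ∨
  (∃ (v : V') (e : ↥G'.edgeSet), v ∈ e.val ∧
    ((a = some (.inl v) ∧ b = some (.inr e)) ∨ (a = some (.inr e) ∧ b = some (.inl v))) ∧ t = 2)


/-!
An e-vertex has label 2 on all its edges and its only neighbours are the v-vertices of its
endpoints, so a strict temporal path from `v*` must reach one of those endpoints by time 1.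
The only edge into a v-vertex with a label below 2 is the one from `v*`, hence that endpoint's
edge `v* v` kept label 1. Conversely `v* → v → e` with labels `1 < 2` is a temporal path.
-/

namespace clabel

variable {V' : Type*} {G' : SimpleGraph V'} {f : V' → ℕ}

theorem inl_right_iff {a : W V' G'} {v : V'} {t : ℕ} :
    clabel G' f a (some (.inl v)) t ↔
      (a = none ∧ t = f v) ∨ ∃ e : ↥G'.edgeSet, v ∈ e.val ∧ a = some (.inr e) ∧ t = 2 := by
  simp only [clabel]
  aesop

theorem inr_right_iff {a : W V' G'} {e : ↥G'.edgeSet} {t : ℕ} :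
    clabel G' f a (some (.inr e)) t ↔ ∃ v ∈ e.val, a = some (.inl v) ∧ t = 2 := by
  simp only [clabel]
  aesop

theorem eq_one_of_reaches_inl {v : V'} {t : ℕ}
    (h : Reaches (clabel G' f) none (some (.inl v)) t) (ht : t < 2) : f v = 1 := by
  cases h with
  | step _ hlabel hlt =>
    rcases inl_right_iff.mp hlabel with ⟨-, rfl⟩ | ⟨_, _, -, rfl⟩ <;> omega

theorem exists_mem_eq_one_of_reaches_inr {e : ↥G'.edgeSet} {t : ℕ}
    (h : Reaches (clabel G' f) none (some (.inr e)) t) : ∃ v ∈ e.val, f v = 1 := by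
  cases h with
  | step hprev hlabel hlt =>
    obtain ⟨v, hv, rfl, rfl⟩ := inr_right_iff.mp hlabel
    exact ⟨v, hv, eq_one_of_reaches_inl hprev hlt⟩

theorem treach_inr_of_mem {e : ↥G'.edgeSet} {v : V'} (hv : v ∈ e.val) (hfv : f v = 1) :
    TReach (clabel G' f) none (some (.inr e)) :=
  ⟨2, .step (.step .refl (inl_right_iff.mpr (.inl ⟨rfl, hfv.symm⟩)) (by omega))
    (inr_right_iff.mpr ⟨v, hv, rfl, rfl⟩) (by omega)⟩

theorem treach_inr_iff {e : ↥G'.edgeSet} :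
    TReach (clabel G' f) none (some (.inr e)) ↔ ∃ v ∈ e.val, f v = 1 :=
  ⟨fun ⟨_, h⟩ => exists_mem_eq_one_of_reaches_inr h,
    fun ⟨_, hv, hfv⟩ => treach_inr_of_mem hv hfv⟩

end clabel

theorem stmt9_general {V' : Type*} (G' : SimpleGraph V') (f : V' → ℕ)
    (e : ↥G'.edgeSet) (vi vj : V') (he : e.val = s(vi, vj)) :
    ¬ TReach (clabel G' f) none (some (.inr e)) ↔ (f vi ≠ 1 ∧ f vj ≠ 1) := by
  rw [clabel.treach_inr_iff, he]
  simp

/-- In the clique-reduction temporal graph, the e-vertex of an edge `s(vi, vj)` of `G'` is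
unreachable from `v*` after delaying label-1 edges iff both edges `v* vi` and `v* vj`
were delayed. -/
theorem stmt9 {V' : Type*} [Fintype V'] [DecidableEq V'] (G' : SimpleGraph V')
    (δ : ℕ) (hδ : 1 ≤ δ) (f : V' → ℕ)
    (hf : ∀ v, f v = 1 ∨ (1 < f v ∧ f v ≤ 1 + δ))
    (e : ↥G'.edgeSet) (vi vj : V') (he : e.val = s(vi, vj)) :
    ¬ TReach (clabel G' f) none (some (.inr e)) ↔ (f vi ≠ 1 ∧ f vj ≠ 1) :=
  stmt9_general G' f e vi vj he
end

section
/- Delaying can speed up arrival but destroy reverse reachability: there exists a temporal graph with vertices x, y, z such that before any delay, x reaches z (earliest) at time 5 and z reaches x, while after delaying one label of the edge yz from 1 to 2, x reaches z at time 2 but x is no longer reachable from z. -/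
/-- Undirected edge between `x` and `y`. -/
def und {n : ℕ} (a b x y : Fin n) : Prop := (a = x ∧ b = y) ∨ (a = y ∧ b = x)

/-- Original temporal graph: x = 0, y = 1, z = 2; edge xy has labels {1, 2},
edge yz has labels {1, 5}. -/
def Lorig : Fin 3 → Fin 3 → ℕ → Prop := fun a b t =>
  (und a b 0 1 ∧ (t = 1 ∨ t = 2)) ∨ (und a b 1 2 ∧ (t = 1 ∨ t = 5))

/-- After delaying the label 1 of edge yz to 2: edge yz has labels {2, 5}. -/
def Ldel : Fin 3 → Fin 3 → ℕ → Prop := fun a b t =>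
  (und a b 0 1 ∧ (t = 1 ∨ t = 2)) ∨ (und a b 1 2 ∧ (t = 2 ∨ t = 5))

theorem und_comm {n : ℕ} (a b x y : Fin n) : und a b x y ↔ und b a x y := by
  unfold und
  tauto

theorem und.eq_or_eq {n : ℕ} {a b x y x' y' : Fin n} (h : und a b x y) (h' : und a b x' y') :
    x = x' ∨ x = y' := by
  unfold und at h h'
  rcases h with ⟨rfl, rfl⟩ | ⟨rfl, rfl⟩ <;> rcases h' with ⟨rfl, rfl⟩ | ⟨rfl, rfl⟩ <;> simp

theorem Reaches.invariant {V : Type*} {L : V → V → ℕ → Prop} {s v : V} {t : ℕ}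
    {P : V → ℕ → Prop} (h₀ : P s 0)
    (hstep : ∀ u w t t', P u t → L u w t' → t < t' → P w t') (h : Reaches L s v t) : P v t := by
  induction h with
  | refl => exact h₀
  | step _ hL hlt ih => exact hstep _ _ _ _ ih hL hlt

theorem Lorig_symm (a b : Fin 3) (t : ℕ) (h : Lorig a b t) : Lorig b a t := by
  simpa only [Lorig, und_comm b a] using h

theorem Ldel_iff (a b : Fin 3) (t : ℕ) :
    Ldel a b t ↔ (Lorig a b t ∧ ¬(und a b 1 2 ∧ t = 1)) ∨ (und a b 1 2 ∧ t = 2) := by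
  by_cases h : und a b 1 2
  · have h' : ¬ und a b 0 1 := fun h' => by simpa using h'.eq_or_eq h
    simp only [Ldel, Lorig, h, h', true_and, false_and, false_or]
    omega
  · simp [Ldel, Lorig, h]

-- From `x = 0` the vertex `y = 1` is entered no earlier than time 1, so the label 1 of `yz`
-- comes too early.
theorem five_le_of_reaches_Lorig {t : ℕ} (h : Reaches Lorig 0 2 t) : 5 ≤ t := by
  refine (h.invariant (P := fun v t => (v = 1 → 1 ≤ t) ∧ (v = 2 → 5 ≤ t)) (by simp) ?_).2 rfl
  rintro u v t t' ⟨hu1, hu2⟩ hL hlt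
  fin_cases u <;> fin_cases v <;> simp_all [Lorig, und] <;> omega

-- After the delay, `y = 1` is entered from `z = 2` no earlier than time 2, when the labels
-- {1, 2} of `xy` are already spent.
theorem not_treach_Ldel_two_zero : ¬ TReach Ldel 2 0 := by
  rintro ⟨t, h⟩
  refine (h.invariant (P := fun v t => v ≠ 0 ∧ (v = 1 → 2 ≤ t)) (by simp) ?_).1 rfl
  rintro u v t t' ⟨hu0, hu1⟩ hL hlt
  fin_cases u <;> fin_cases v <;> simp_all [Ldel, und] <;> omega

/-- Delaying can speed up arrival but destroy reverse reachability: before the delay,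
x reaches z earliest at time 5 and z reaches x; after delaying one label 1 of edge yz to 2,
x reaches z at time 2 but x is no longer reachable from z. -/
theorem stmt11 :
    (∀ a b t, Lorig a b t → Lorig b a t) ∧
    Lorig 1 2 1 ∧
    (∀ a b t, Ldel a b t ↔ (Lorig a b t ∧ ¬(und a b 1 2 ∧ t = 1)) ∨ (und a b 1 2 ∧ t = 2)) ∧
    Reaches Lorig 0 2 5 ∧ (∀ t, Reaches Lorig 0 2 t → 5 ≤ t) ∧
    TReach Lorig 2 0 ∧
    Reaches Ldel 0 2 2 ∧
    ¬ TReach Ldel 2 0 := by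
  refine ⟨Lorig_symm, by simp [Lorig, und], Ldel_iff, ?_, fun _ => five_le_of_reaches_Lorig,
    ⟨2, ?_⟩, ?_, not_treach_Ldel_two_zero⟩
  · exact .step (.step .refl (by simp [Lorig, und] : Lorig 0 1 1) one_pos)
      (by simp [Lorig, und] : Lorig 1 2 5) (by norm_num)
  · exact .step (.step .refl (by simp [Lorig, und] : Lorig 2 1 1) one_pos)
      (by simp [Lorig, und] : Lorig 1 0 2) one_lt_two
  · exact .step (.step .refl (by simp [Ldel, und] : Ldel 0 1 1) one_pos)
      (by simp [Ldel, und] : Ldel 1 2 2) one_lt_two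
end

section
/- On a temporal path graph v1, v2, ..., vn where edge v_i v_{i+1} has exactly the label i for each i, every vertex is reachable from v1 via a strict temporal path, and after a 2-merge of E_j and E_{j+1} (for any 1 ≤ j < n−1), exactly the vertices v1, ..., v_{j+1} are reachable from v1. -/
/-- The temporal path graph on vertices `v₁, …, vₙ` (0-indexed: `0, …, n-1`), where the edge
between `v_i` and `v_{i+1}` (indices `i-1` and `i`) has exactly the label `i`. -/
def pathL (n : ℕ) : Fin n → Fin n → ℕ → Prop := fun a b t =>
  (a.val + 1 = b.val ∧ t = a.val + 1) ∨ (b.val + 1 = a.val ∧ t = b.val + 1)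

/-- A 2-merge of the edge-sets with labels `t₁` and `t₂ = t₁ + 1`: every edge with label `t₁`
gets label `t₂` instead. -/
def mergeL {V : Type*} (L : V → V → ℕ → Prop) (t₁ t₂ : ℕ) : V → V → ℕ → Prop :=
  fun a b t => (L a b t ∧ t ≠ t₁) ∨ (L a b t₁ ∧ t = t₂)

theorem Reaches.mergeL_of_lt {V : Type*} {L : V → V → ℕ → Prop} {s v : V} {t t₁ : ℕ}
    (t₂ : ℕ) (h : Reaches L s v t) (ht : t < t₁) : Reaches (mergeL L t₁ t₂) s v t := by
  induction h with
  | refl => exact .refl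
  | step _ hedge hlt ih => exact .step (ih (hlt.trans ht)) (.inl ⟨hedge, ht.ne⟩) hlt

theorem reaches_pathL {n : ℕ} (hn : 0 < n) (k : ℕ) (hk : k < n) :
    Reaches (pathL n) ⟨0, hn⟩ ⟨k, hk⟩ k := by
  induction k with
  | zero => exact .refl
  | succ k ih => exact .step (ih (by omega)) (.inl ⟨rfl, rfl⟩) k.lt_succ_self

/-- After the merge `v_{j+1}` is reached only at time `j + 1`, and the edge leaving it also
carries label `j + 1`, so strictness stops every journey there. -/
theorem arrival_of_reaches_mergeL_pathL {n j : ℕ} (hj : 1 ≤ j) (hn : 0 < n) {v : Fin n} {t : ℕ}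
    (h : Reaches (mergeL (pathL n) j (j + 1)) ⟨0, hn⟩ v t) :
    (v.val < j ∧ t = v.val) ∨ (v.val = j ∧ t = j + 1) := by
  induction h with
  | refl => exact .inl ⟨hj, rfl⟩
  | step _ hedge _ ih =>
    rcases hedge with ⟨hedge, hne⟩ | ⟨hedge, rfl⟩ <;>
      rcases hedge with ⟨_, _⟩ | ⟨_, _⟩ <;> omega

theorem treach_mergeL_pathL_of_le {n j : ℕ} (hn : 0 < n) (v : Fin n) (hv : v.val ≤ j) :
    TReach (mergeL (pathL n) j (j + 1)) ⟨0, hn⟩ v := by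
  rcases hv.lt_or_eq with hlt | rfl
  · exact ⟨v, (reaches_pathL hn v v.isLt).mergeL_of_lt _ hlt⟩
  · rcases v with ⟨_ | k, hk⟩
    · exact ⟨0, .refl⟩
    · have hprev := (reaches_pathL hn k (by omega)).mergeL_of_lt (k + 1 + 1) k.lt_succ_self
      exact ⟨k + 1 + 1, .step hprev (.inr ⟨.inl ⟨rfl, rfl⟩, rfl⟩) (by omega)⟩

/-- On the temporal path graph every vertex is reachable from `v₁`, and after the 2-merge of
`E_j` and `E_{j+1}` (`1 ≤ j < n - 1`) exactly `v₁, …, v_{j+1}` are reachable from `v₁`. -/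
theorem stmt13 (n j : ℕ) (hj : 1 ≤ j) (hjn : j < n - 1) :
    (∀ v : Fin n, TReach (pathL n) ⟨0, by omega⟩ v) ∧
    (∀ v : Fin n, TReach (mergeL (pathL n) j (j + 1)) ⟨0, by omega⟩ v ↔ v.val ≤ j) := by
  have hn : 0 < n := by omega
  refine ⟨fun v => ⟨v, reaches_pathL hn v v.isLt⟩, fun v => ⟨?_, treach_mergeL_pathL_of_le hn v⟩⟩
  rintro ⟨t, h⟩
  rcases arrival_of_reaches_mergeL_pathL hj hn h with ⟨hv, -⟩ | ⟨hv, -⟩ <;> omega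
end

section
/- In the gadget path c_k — y^l (label 4k), y^l — z^l (label 4k+1), c_k — y^r (label 4k+1), y^r — z^r (label 4k+2): merging labels 4k and 4k+1 (all edges with label 4k become available at 4k+1) makes z^l unreachable from c_k while y^l, y^r, z^r remain reachable; symmetrically, merging 4k+1 with 4k+2 makes z^r unreachable while y^l, z^l, y^r remain reachable from c_k. -/
/-- The clause gadget: vertices c = 0, yˡ = 1, zˡ = 2, yʳ = 3, zʳ = 4, with edges
c–yˡ (label 4k), yˡ–zˡ (label 4k+1), c–yʳ (label 4k+1), yʳ–zʳ (label 4k+2). -/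
def gadget (k : ℕ) : Fin 5 → Fin 5 → ℕ → Prop := fun a b t =>
  (und a b 0 1 ∧ t = 4 * k) ∨ (und a b 1 2 ∧ t = 4 * k + 1) ∨
  (und a b 0 3 ∧ t = 4 * k + 1) ∨ (und a b 3 4 ∧ t = 4 * k + 2)

/-!
After either merge, every vertex of the gadget that can be reached at all is reached at exactly
one time, and these arrival times are closed under taking a further edge. Merging `4k` into
`4k + 1` delays `yˡ` to time `4k + 1`, so the edge `yˡ zˡ`, also at `4k + 1`, can no longer be
used by a strict path; merging `4k + 1` into `4k + 2` delays `yʳ` to `4k + 2` and blocks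
`yʳ zʳ` in the same way. All other vertices keep a path.
-/

namespace Reaches

variable {V : Type*} {L : V → V → ℕ → Prop} {s : V}

theorem single {v : V} {t : ℕ} (h : L s v t) (ht : 0 < t) : Reaches L s v t :=
  .step .refl h ht

end Reaches

section Gadget

variable (k : ℕ)

theorem reaches_mergeL_gadget_left_cases {v : Fin 5} {t : ℕ}
    (h : Reaches (mergeL (gadget k) (4 * k) (4 * k + 1)) 0 v t) :
    (v = 0 ∧ t = 0) ∨ (v = 1 ∧ t = 4 * k + 1) ∨ (v = 3 ∧ t = 4 * k + 1) ∨
      (v = 4 ∧ t = 4 * k + 2) := by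
  induction h with
  | refl => exact Or.inl ⟨rfl, rfl⟩
  | step _ hL hlt hu =>
    rcases hL with ⟨hg, hne⟩ | ⟨hg, rfl⟩ <;>
    rcases hg with ⟨huv, ht⟩ | ⟨huv, ht⟩ | ⟨huv, ht⟩ | ⟨huv, ht⟩ <;>
    rcases huv with ⟨rfl, rfl⟩ | ⟨rfl, rfl⟩ <;>
    rcases hu with ⟨hu, rfl⟩ | ⟨hu, rfl⟩ | ⟨hu, rfl⟩ | ⟨hu, rfl⟩ <;>
    simp_all

theorem reaches_mergeL_gadget_right_cases {v : Fin 5} {t : ℕ}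
    (h : Reaches (mergeL (gadget k) (4 * k + 1) (4 * k + 2)) 0 v t) :
    (v = 0 ∧ t = 0) ∨ (v = 1 ∧ t = 4 * k) ∨ (v = 2 ∧ t = 4 * k + 2) ∨
      (v = 3 ∧ t = 4 * k + 2) := by
  induction h with
  | refl => exact Or.inl ⟨rfl, rfl⟩
  | step _ hL hlt hu =>
    rcases hL with ⟨hg, hne⟩ | ⟨hg, rfl⟩ <;>
    rcases hg with ⟨huv, ht⟩ | ⟨huv, ht⟩ | ⟨huv, ht⟩ | ⟨huv, ht⟩ <;>
    rcases huv with ⟨rfl, rfl⟩ | ⟨rfl, rfl⟩ <;>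
    rcases hu with ⟨hu, rfl⟩ | ⟨hu, rfl⟩ | ⟨hu, rfl⟩ | ⟨hu, rfl⟩ <;>
    simp_all

theorem mergeL_gadget_left_reachability :
    ¬ TReach (mergeL (gadget k) (4 * k) (4 * k + 1)) 0 2 ∧
      TReach (mergeL (gadget k) (4 * k) (4 * k + 1)) 0 1 ∧
      TReach (mergeL (gadget k) (4 * k) (4 * k + 1)) 0 3 ∧
      TReach (mergeL (gadget k) (4 * k) (4 * k + 1)) 0 4 := by
  have to_yl : Reaches (mergeL (gadget k) (4 * k) (4 * k + 1)) 0 1 (4 * k + 1) :=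
    .single (by simp [mergeL, gadget, und]) (by omega)
  have to_yr : Reaches (mergeL (gadget k) (4 * k) (4 * k + 1)) 0 3 (4 * k + 1) :=
    .single (by simp [mergeL, gadget, und]) (by omega)
  have to_zr : Reaches (mergeL (gadget k) (4 * k) (4 * k + 1)) 0 4 (4 * k + 2) :=
    to_yr.step (by simp [mergeL, gadget, und]) (by omega)
  exact ⟨fun ⟨_, h⟩ => by simpa using reaches_mergeL_gadget_left_cases k h, ⟨_, to_yl⟩, ⟨_, to_yr⟩,
    ⟨_, to_zr⟩⟩

theorem mergeL_gadget_right_reachability (hk : 0 < k) :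
    ¬ TReach (mergeL (gadget k) (4 * k + 1) (4 * k + 2)) 0 4 ∧
      TReach (mergeL (gadget k) (4 * k + 1) (4 * k + 2)) 0 1 ∧
      TReach (mergeL (gadget k) (4 * k + 1) (4 * k + 2)) 0 2 ∧
      TReach (mergeL (gadget k) (4 * k + 1) (4 * k + 2)) 0 3 := by
  -- the trivial path sits at time 0, so the edge `c yˡ` is usable only if its label `4k` is positive
  have to_yl : Reaches (mergeL (gadget k) (4 * k + 1) (4 * k + 2)) 0 1 (4 * k) :=
    .single (by simp [mergeL, gadget, und]) (by omega)
  have to_zl : Reaches (mergeL (gadget k) (4 * k + 1) (4 * k + 2)) 0 2 (4 * k + 2) :=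
    to_yl.step (by simp [mergeL, gadget, und]) (by omega)
  have to_yr : Reaches (mergeL (gadget k) (4 * k + 1) (4 * k + 2)) 0 3 (4 * k + 2) :=
    .single (by simp [mergeL, gadget, und]) (by omega)
  exact ⟨fun ⟨_, h⟩ => by simpa using reaches_mergeL_gadget_right_cases k h, ⟨_, to_yl⟩, ⟨_, to_zl⟩,
    ⟨_, to_yr⟩⟩

end Gadget

/-- Merging 4k with 4k+1 makes zˡ unreachable from c while yˡ, yʳ, zʳ remain reachable;
merging 4k+1 with 4k+2 makes zʳ unreachable while yˡ, zˡ, yʳ remain reachable. -/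
theorem stmt16 (k : ℕ) (hk : 1 ≤ k) :
    (¬ TReach (mergeL (gadget k) (4 * k) (4 * k + 1)) 0 2 ∧
      TReach (mergeL (gadget k) (4 * k) (4 * k + 1)) 0 1 ∧
      TReach (mergeL (gadget k) (4 * k) (4 * k + 1)) 0 3 ∧
      TReach (mergeL (gadget k) (4 * k) (4 * k + 1)) 0 4) ∧
    (¬ TReach (mergeL (gadget k) (4 * k + 1) (4 * k + 2)) 0 4 ∧
      TReach (mergeL (gadget k) (4 * k + 1) (4 * k + 2)) 0 1 ∧
      TReach (mergeL (gadget k) (4 * k + 1) (4 * k + 2)) 0 2 ∧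
      TReach (mergeL (gadget k) (4 * k + 1) (4 * k + 2)) 0 3) :=
  ⟨mergeL_gadget_left_reachability k, mergeL_gadget_right_reachability k hk⟩
end
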